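/- Let S₁, S₂ ⊂ ℝ be disjoint bounded measurable sets of positive Lebesgue measure, and let K, N ∈ ℕ be such that S₁ + k/N ⊆ S₂ for every k = 1, 2, …, K. Let c₁, c₂, …, c_K ∈ [0, N) be distinct real numbers. Suppose there exist sets Λ₁ ⊆ ℝ \ ⋃_{k=1}^{K}(Nℤ + c_k) and Λ₂ ⊆ ⋃_{k=1}^{K}(Nℤ + c_k) such that E(Λ₁ ∪ Λ₂) is complete in L²(S₁ ∪ S₂). Then E(Λ₁) is complete in L²(S₁). -/

import Mathlib

open MeasureTheory Set

open Classical in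
/-- The exponential function `t ↦ e^{2πiλt}` as an element of `L²(S)`. -/
noncomputable def expLp (S : Set ℝ) (l : ℝ) : Lp ℂ 2 (volume.restrict S) :=
  if h : MemLp (fun t : ℝ => Complex.exp (2 * Real.pi * Complex.I * l * t)) 2 (volume.restrict S)
  then h.toLp _ else 0

/-- The exponential system `E(Λ)` is complete in `L²(S)`:
its (finite) linear span is dense. -/
def ExpComplete (S Λ : Set ℝ) : Prop :=
  (Submodule.span ℂ (expLp S '' Λ)).topologicalClosure = ⊤

/-- The exponential system `E(Λ)` is a Riesz sequence in `L²(S)` with bounds `A ≤ B`. -/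
def ExpRieszSequenceWith (S Λ : Set ℝ) (A B : ℝ) : Prop :=
  0 < A ∧ A ≤ B ∧ ∀ (F : Finset ℝ) (c : ℝ → ℂ), (F : Set ℝ) ⊆ Λ →
    A * ∑ l ∈ F, ‖c l‖ ^ 2 ≤ ‖∑ l ∈ F, c l • expLp S l‖ ^ 2 ∧
    ‖∑ l ∈ F, c l • expLp S l‖ ^ 2 ≤ B * ∑ l ∈ F, ‖c l‖ ^ 2

/-- The exponential system `E(Λ)` is a Riesz sequence in `L²(S)`. -/
def ExpRieszSequence (S Λ : Set ℝ) : Prop :=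
  ∃ A B : ℝ, ExpRieszSequenceWith S Λ A B

/-- The exponential system `E(Λ)` is a Riesz basis for `L²(S)`:
a complete Riesz sequence. -/
def ExpRieszBasis (S Λ : Set ℝ) : Prop :=
  ExpComplete S Λ ∧ ExpRieszSequence S Λ

/-- The exponential system `E(Λ)` is a frame for `L²(S)` with bounds `A ≤ B`. -/
def ExpFrameWith (S Λ : Set ℝ) (A B : ℝ) : Prop :=
  0 < A ∧ A ≤ B ∧ ∀ f : Lp ℂ 2 (volume.restrict S),
    A * ‖f‖ ^ 2 ≤ ∑' l : Λ, ‖(inner ℂ f (expLp S (l : ℝ)) : ℂ)‖ ^ 2 ∧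
    ∑' l : Λ, ‖(inner ℂ f (expLp S (l : ℝ)) : ℂ)‖ ^ 2 ≤ B * ‖f‖ ^ 2

/-- The exponential system `E(Λ)` is a frame for `L²(S)`. -/
def ExpFrame (S Λ : Set ℝ) : Prop :=
  ∃ A B : ℝ, ExpFrameWith S Λ A B

/-- The square of the smallest singular value of a (rectangular) matrix. -/
noncomputable def sigmaMinSq {K L : Type*} [Fintype K] [Fintype L] (W : Matrix K L ℂ) : ℝ :=
  if Fintype.card L ≤ Fintype.card K then
    sInf {r : ℝ | ∃ v : L → ℂ, (∑ i, ‖v i‖ ^ 2) = 1 ∧ r = ∑ k, ‖W.mulVec v k‖ ^ 2}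
  else
    sInf {r : ℝ | ∃ v : K → ℂ, (∑ i, ‖v i‖ ^ 2) = 1 ∧ r = ∑ l, ‖W.conjTranspose.mulVec v l‖ ^ 2}

open Complex Polynomial Bornology

noncomputable def expE (l : ℝ) : ℝ → ℂ := fun t => Complex.exp (2 * Real.pi * Complex.I * l * t)

lemma expE_norm (l t : ℝ) : ‖expE l t‖ = 1 := by
  have : (2 * Real.pi * Complex.I * l * t) = ((2 * Real.pi * l * t : ℝ) : ℂ) * Complex.I := by
    push_cast; ring
  rw [expE, this, Complex.norm_exp_ofReal_mul_I]

lemma expE_continuous (l : ℝ) : Continuous (expE l) := by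
  unfold expE; fun_prop

lemma isFiniteRestrict {S : Set ℝ} (hb : Bornology.IsBounded S) :
    IsFiniteMeasure (volume.restrict S) := by
  constructor
  rw [Measure.restrict_apply_univ]
  obtain ⟨r, hr⟩ := hb.subset_closedBall 0
  exact lt_of_le_of_lt (measure_mono hr) (measure_closedBall_lt_top)

lemma memℒp_expE {S : Set ℝ} (hb : Bornology.IsBounded S) (l : ℝ) :
    MemLp (expE l) 2 (volume.restrict S) := by
  haveI := isFiniteRestrict hb
  exact MemLp.of_bound (expE_continuous l).aestronglyMeasurable 1
    (Filter.Eventually.of_forall fun t => le_of_eq (expE_norm l t))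

lemma expLp_eq {S : Set ℝ} (hb : Bornology.IsBounded S) (l : ℝ) :
    expLp S l = (memℒp_expE hb l).toLp (expE l) := by
  have h : MemLp (fun t : ℝ => Complex.exp (2 * Real.pi * Complex.I * l * t)) 2
      (volume.restrict S) := memℒp_expE hb l
  rw [expLp, dif_pos h]; rfl

lemma expLp_coeFn {S : Set ℝ} (hb : Bornology.IsBounded S) (l : ℝ) :
    ⇑(expLp S l) =ᵐ[volume.restrict S] expE l := by
  rw [expLp_eq hb l]; exact MemLp.coeFn_toLp _

lemma inner_expLp {S : Set ℝ} (hb : Bornology.IsBounded S) (l : ℝ)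
    (f : Lp ℂ 2 (volume.restrict S)) :
    (inner ℂ f (expLp S l) : ℂ) = ∫ t, (starRingEnd ℂ) (f t) * expE l t ∂(volume.restrict S) := by
  rw [MeasureTheory.L2.inner_def]
  apply integral_congr_ae
  filter_upwards [expLp_coeFn hb l] with t ht
  rw [ht, RCLike.inner_apply, mul_comm]

lemma integrable_conj' {μ : Measure ℝ} {h : ℝ → ℂ} (hi : Integrable h μ) :
    Integrable (fun t => (starRingEnd ℂ) (h t)) μ := by
  refine ⟨Complex.continuous_conj.comp_aestronglyMeasurable hi.1, ?_⟩
  simpa [HasFiniteIntegral] using hi.2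

lemma expE_add (l a b : ℝ) : expE l (a + b) = expE l a * expE l b := by
  simp only [expE, ← Complex.exp_add]
  congr 1
  push_cast
  ring

/-- key translation identity -/
lemma shift_integral {F : ℝ → ℂ} (s l : ℝ) :
    ∫ t, (starRingEnd ℂ) (F (t - s)) * expE l t =
      expE l s * ∫ t, (starRingEnd ℂ) (F t) * expE l t := by
  have key := integral_add_right_eq_self (μ := volume)
      (fun t => (starRingEnd ℂ) (F (t - s)) * expE l t) s
  rw [← key]
  have : ∀ x : ℝ, (starRingEnd ℂ) (F (x + s - s)) * expE l (x + s) =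
      expE l s * ((starRingEnd ℂ) (F x) * expE l x) := by
    intro x
    rw [add_sub_cancel_right, expE_add]
    ring
  simp_rw [this]
  rw [integral_const_mul]

theorem statement_7
    (S₁ S₂ : Set ℝ) (hS₁m : MeasurableSet S₁) (hS₂m : MeasurableSet S₂)
    (hS₁b : Bornology.IsBounded S₁) (hS₂b : Bornology.IsBounded S₂)
    (hS₁pos : 0 < volume S₁) (hS₂pos : 0 < volume S₂)
    (hdisj : Disjoint S₁ S₂)
    (K N : ℕ) (hK : 0 < K) (hN : 0 < N)
    (hsub : ∀ k : ℕ, 1 ≤ k → k ≤ K → (fun x => x + (k : ℝ) / N) '' S₁ ⊆ S₂)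
    (c : Fin K → ℝ) (hc : Function.Injective c) (hc' : ∀ k, c k ∈ Set.Ico (0 : ℝ) N)
    (Λ₁ Λ₂ : Set ℝ)
    (hΛ₁ : ∀ x ∈ Λ₁, ¬ ∃ (k : Fin K) (n : ℤ), x = N * n + c k)
    (hΛ₂ : ∀ x ∈ Λ₂, ∃ (k : Fin K) (n : ℤ), x = N * n + c k)
    (hcomp : ExpComplete (S₁ ∪ S₂) (Λ₁ ∪ Λ₂)) :
    ExpComplete S₁ Λ₁ := by
  classical
  have hUm : MeasurableSet (S₁ ∪ S₂) := hS₁m.union hS₂m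
  have hUb : IsBounded (S₁ ∪ S₂) := hS₁b.union hS₂b
  haveI := isFiniteRestrict hS₁b
  rw [ExpComplete, Submodule.topologicalClosure_eq_top_iff] at hcomp ⊢
  rw [Submodule.eq_bot_iff]
  intro f hf
  -- orthogonality of f to Λ₁ exponentials
  have horth : ∀ l ∈ Λ₁, (inner ℂ f (expLp S₁ l) : ℂ) = 0 := by
    intro l hl
    rw [inner_eq_zero_symm]
    exact hf _ (Submodule.subset_span (mem_image_of_mem _ hl))
  -- the polynomial
  set w : Fin K → ℂ := fun k => Complex.exp (2 * Real.pi * Complex.I * (c k / N)) with hw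
  set p : Polynomial ℂ := ∏ k : Fin K, (X - C (w k)) with hp
  have hpmonic : p.Monic := monic_prod_of_monic _ _ fun k _ => monic_X_sub_C _
  have hpdeg : p.natDegree = K := by
    rw [hp, natDegree_prod_of_monic _ _ fun k _ => monic_X_sub_C _]
    simp
  have hproot : ∀ k : Fin K, p.eval (w k) = 0 := by
    intro k
    rw [hp, eval_prod]
    exact Finset.prod_eq_zero (Finset.mem_univ k) (by simp)
  have hp0 : p.coeff 0 ≠ 0 := by
    rw [coeff_zero_eq_eval_zero, hp, eval_prod]
    refine Finset.prod_ne_zero_iff.2 fun k _ => ?_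
    simp only [eval_sub, eval_X, eval_C, zero_sub, neg_ne_zero]
    exact Complex.exp_ne_zero _
  -- the function F and its properties
  set F : ℝ → ℂ := S₁.indicator ⇑f with hF
  have hFsm : StronglyMeasurable F := (Lp.stronglyMeasurable f).indicator hS₁m
  have hF2 : MemLp F 2 volume := (memLp_indicator_iff_restrict hS₁m).2 (Lp.memLp f)
  have hF1 : Integrable F volume := memLp_one_iff_integrable.1
    ((memLp_indicator_iff_restrict hS₁m).2 ((Lp.memLp f).mono_exponent (by norm_num)))
  -- the combined function G
  set G : ℝ → ℂ := fun t =>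
    ∑ j ∈ Finset.range (K+1), (starRingEnd ℂ) (p.coeff j) * F (t - (j:ℝ) / N) with hG
  have hshiftMP : ∀ s : ℝ, MeasurePreserving (fun t : ℝ => t - s) volume volume :=
    fun s => measurePreserving_sub_right volume s
  have hG2 : MemLp G 2 volume := by
    apply memLp_finset_sum
    intro j _
    exact (hF2.comp_measurePreserving (hshiftMP ((j:ℝ)/N))).const_mul _
  have hGU : MemLp G 2 (volume.restrict (S₁ ∪ S₂)) := hG2.restrict _
  set g : Lp ℂ 2 (volume.restrict (S₁ ∪ S₂)) := hGU.toLp G with hgdef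
  -- support of G
  have hGsupp : ∀ t, t ∉ S₁ ∪ S₂ → G t = 0 := by
    intro t ht
    apply Finset.sum_eq_zero
    intro j hj
    have hnot : t - (j:ℝ)/N ∉ S₁ := by
      intro hmem
      rcases Nat.eq_zero_or_pos j with h0 | h1
      · subst h0
        simp only [Nat.cast_zero, zero_div, sub_zero] at hmem
        exact ht (Or.inl hmem)
      · have hjK : j ≤ K := Nat.lt_succ_iff.1 (Finset.mem_range.1 hj)
        exact ht (Or.inr (hsub j h1 hjK ⟨t - (j:ℝ)/N, hmem, by ring⟩))
    rw [hF, Set.indicator_of_notMem hnot, mul_zero]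
  -- integrability of the terms
  have hInt : ∀ s l : ℝ, Integrable (fun t => (starRingEnd ℂ) (F (t - s)) * expE l t) volume := by
    intro s l
    have h1 : Integrable (fun t => F (t - s)) volume :=
      ((hshiftMP s).integrable_comp hFsm.aestronglyMeasurable).2 hF1
    have h3 := (integrable_conj' h1).bdd_mul (expE_continuous l).aestronglyMeasurable
      (Filter.Eventually.of_forall fun t => le_of_eq (expE_norm l t))
    simpa [mul_comm] using h3
  -- the inner product formula
  have hinner : ∀ l : ℝ,
      (inner ℂ g (expLp (S₁ ∪ S₂) l) : ℂ) =
        (∑ j ∈ Finset.range (K+1), p.coeff j * expE l ((j:ℝ)/N)) *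
          (inner ℂ f (expLp S₁ l) : ℂ) := by
    intro l
    rw [inner_expLp hUb l g]
    have step1 : ∫ t, (starRingEnd ℂ) (g t) * expE l t ∂(volume.restrict (S₁ ∪ S₂))
        = ∫ t, (starRingEnd ℂ) (G t) * expE l t ∂(volume.restrict (S₁ ∪ S₂)) := by
      apply integral_congr_ae
      filter_upwards [hGU.coeFn_toLp] with t ht
      rw [hgdef, ht]
    have step2 : ∫ t, (starRingEnd ℂ) (G t) * expE l t ∂(volume.restrict (S₁ ∪ S₂))
        = ∫ t, (starRingEnd ℂ) (G t) * expE l t := by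
      rw [← integral_indicator hUm]
      congr 1
      funext t
      by_cases ht : t ∈ S₁ ∪ S₂
      · rw [Set.indicator_of_mem ht]
      · rw [Set.indicator_of_notMem ht, hGsupp t ht, map_zero, zero_mul]
    have hGexp : ∀ t, (starRingEnd ℂ) (G t) * expE l t
        = ∑ j ∈ Finset.range (K+1),
            p.coeff j * ((starRingEnd ℂ) (F (t - (j:ℝ)/N)) * expE l t) := by
      intro t
      simp only [hG, map_sum, Finset.sum_mul]
      apply Finset.sum_congr rfl
      intro j _
      rw [map_mul, Complex.conj_conj]
      ring
    have hFint : ∫ t, (starRingEnd ℂ) (F t) * expE l t = (inner ℂ f (expLp S₁ l) : ℂ) := by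
      rw [inner_expLp hS₁b l f, ← integral_indicator hS₁m]
      congr 1
      funext t
      by_cases ht : t ∈ S₁
      · rw [Set.indicator_of_mem ht, hF, Set.indicator_of_mem ht]
      · rw [Set.indicator_of_notMem ht, hF, Set.indicator_of_notMem ht, map_zero, zero_mul]
    rw [step1, step2]
    simp_rw [hGexp]
    rw [integral_finset_sum _ (fun j _ => (hInt _ l).const_mul _)]
    simp_rw [integral_const_mul, shift_integral, hFint, Finset.sum_mul]
    apply Finset.sum_congr rfl
    intro j _
    ring
  -- orthogonality of g to all exponentials of Λ₁ ∪ Λ₂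
  have hzero : ∀ l ∈ Λ₁ ∪ Λ₂, (inner ℂ (expLp (S₁ ∪ S₂) l) g : ℂ) = 0 := by
    intro l hl
    rw [inner_eq_zero_symm, hinner l]
    rcases hl with hl | hl
    · rw [horth l hl, mul_zero]
    · obtain ⟨k, n, rfl⟩ := hΛ₂ l hl
      have hNC : ((N:ℂ)) ≠ 0 := Nat.cast_ne_zero.2 hN.ne'
      have hterm : ∀ j : ℕ, expE ((N:ℝ)*(n:ℝ) + c k) ((j:ℝ)/N) = w k ^ j := by
        intro j
        have harg : (2 * (Real.pi:ℂ) * Complex.I * (((N:ℝ)*(n:ℝ) + c k : ℝ) : ℂ)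
              * ((((j:ℝ)/N : ℝ)) : ℂ))
            = (n*j : ℤ) * (2 * (Real.pi:ℂ) * Complex.I)
              + (j:ℂ) * (2 * (Real.pi:ℂ) * Complex.I * (((c k : ℝ) : ℂ)/N)) := by
          push_cast
          field_simp
        show Complex.exp _ = w k ^ j
        rw [harg, Complex.exp_add, Complex.exp_int_mul_two_pi_mul_I, one_mul,
          Complex.exp_nat_mul, hw]
      have hsum : (∑ j ∈ Finset.range (K+1),
          p.coeff j * expE ((N:ℝ)*(n:ℝ) + c k) ((j:ℝ)/N)) = 0 := by
        simp_rw [hterm]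
        rw [← eval_eq_sum_range' (by rw [hpdeg]; exact Nat.lt_succ_self K) (w k), hproot k]
      rw [hsum, zero_mul]
  -- g lies in the orthogonal complement of the span, hence is zero
  have hgmem : g ∈ (Submodule.span ℂ (expLp (S₁ ∪ S₂) '' (Λ₁ ∪ Λ₂)))ᗮ := by
    rw [Submodule.mem_orthogonal]
    intro u hu
    refine Submodule.span_induction (fun v hv => ?_) (inner_zero_left _)
      (fun x y _ _ hx hy => by rw [inner_add_left, hx, hy, add_zero])
      (fun r x _ hx => by rw [inner_smul_left, hx, mul_zero]) hu
    obtain ⟨l, hl, rfl⟩ := hv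
    exact hzero l hl
  have hg0 : g = 0 := by
    rw [hcomp, Submodule.mem_bot] at hgmem
    exact hgmem
  have hGae0 : G =ᵐ[volume.restrict (S₁ ∪ S₂)] 0 := by
    have h1 : ⇑g =ᵐ[volume.restrict (S₁ ∪ S₂)] G := hGU.coeFn_toLp
    have h2 : ⇑g =ᵐ[volume.restrict (S₁ ∪ S₂)] 0 := by
      rw [hg0]; exact Lp.coeFn_zero _ _ _
    exact h1.symm.trans h2
  have hS₁ae : G =ᵐ[volume.restrict S₁] 0 :=
    hGae0.filter_mono (ae_mono (Measure.restrict_mono subset_union_left le_rfl))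
  -- conclude f = 0
  rw [Lp.eq_zero_iff_ae_eq_zero]
  filter_upwards [hS₁ae, ae_restrict_mem hS₁m] with t hGt ht
  have hGt' : (∑ j ∈ Finset.range (K+1), (starRingEnd ℂ) (p.coeff j) * F (t - (j:ℝ)/N)) = 0 := hGt
  have hshape : (∑ j ∈ Finset.range (K+1), (starRingEnd ℂ) (p.coeff j) * F (t - (j:ℝ)/N))
      = (starRingEnd ℂ) (p.coeff 0) * F t := by
    rw [Finset.sum_eq_single_of_mem 0 (Finset.mem_range.2 (Nat.succ_pos K))]
    · simp
    · intro j _ hj0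
      have h1 : 1 ≤ j := Nat.one_le_iff_ne_zero.2 hj0
      have hnot : t - (j:ℝ)/N ∉ S₁ := by
        intro hmem
        have : t ∈ S₂ := hsub j h1 (Nat.lt_succ_iff.1 (Finset.mem_range.1 ‹j ∈ Finset.range (K+1)›)) ⟨t - (j:ℝ)/N, hmem, by ring⟩
        exact (hdisj.ne_of_mem ht this) rfl
      rw [hF, Set.indicator_of_notMem hnot, mul_zero]
  have hFt : F t = 0 := by
    have := hshape ▸ hGt'
    rcases mul_eq_zero.1 this with h | h
    · exact absurd (star_eq_zero.1 h) hp0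
    · exact h
  have : f t = F t := by rw [hF, Set.indicator_of_mem ht]
  rw [Pi.zero_apply, this, hFt]
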